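/- Let $R = k[x_1,\dots,x_m]$ and $I$ a monomial ideal that is ${}^*$strongly Golod, i.e. $\partial^*(I)^2 \subseteq I$. Then for every $s \ge 2$, the power $I^s$ is ${}^*$strongly Golod, i.e. $\partial^*(I^s)^2 \subseteq I^s$. -/

import Mathlib

open MvPolynomial

variable {m : ℕ} {k : Type*}

/-- An ideal of `k[x_1, …, x_m]` is a monomial ideal if it is generated by monomials. -/
def IsMonomialIdeal [Field k] (I : Ideal (MvPolynomial (Fin m) k)) : Prop :=
  ∃ S : Set (Fin m →₀ ℕ), I = Ideal.span ((fun e => monomial e (1 : k)) '' S)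

/-- `e` is the exponent vector of a minimal monomial generator of `I`: the monomial `x^e`
lies in `I` and no proper divisor of it lies in `I`. -/
def IsMinMonomialGen [Field k] (I : Ideal (MvPolynomial (Fin m) k)) (e : Fin m →₀ ℕ) : Prop :=
  monomial e (1 : k) ∈ I ∧ ∀ e' : Fin m →₀ ℕ, e' ≤ e → e' ≠ e → monomial e' (1 : k) ∉ I

/-- `∂*(I)`: the ideal generated by all quotients `f / x_i`, where `f` runs over the minimal
monomial generators of `I` and `x_i` over the variables dividing `f`. -/
noncomputable def partialStar [Field k] (I : Ideal (MvPolynomial (Fin m) k)) :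
    Ideal (MvPolynomial (Fin m) k) :=
  Ideal.span { p | ∃ (e : Fin m →₀ ℕ) (i : Fin m), IsMinMonomialGen I e ∧ e i ≠ 0 ∧
    p = monomial (e - Finsupp.single i 1) (1 : k) }

/-! A minimal generator of `I ^ (n + 1)` is a sum of a minimal generator of `I` and one of `I ^ n`;
peeling off factors, one that is divisible by `x_i` has the form `g * u` with `g` a minimal
generator of `I` divisible by `x_i` and `u ∈ I ^ n`. Hence `∂*(I ^ (n + 1)) ⊆ ∂*(I) * I ^ n`, and
squaring gives `∂*(I ^ (n + 1))² ⊆ ∂*(I)² * I ^ (2n) ⊆ I ^ (2n + 1) ⊆ I ^ (n + 1)`. -/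

open Pointwise

section MonomialIdeal

variable [Field k]

lemma monomial_add_one (a b : Fin m →₀ ℕ) :
    (monomial (a + b) (1 : k) : MvPolynomial (Fin m) k) = monomial a 1 * monomial b 1 := by
  rw [monomial_mul, one_mul]

lemma image_monomial_one_mul_image (S T : Set (Fin m →₀ ℕ)) :
    ((fun e => (monomial e (1 : k) : MvPolynomial (Fin m) k)) '' S) *
      ((fun e => monomial e (1 : k)) '' T) = (fun e => monomial e (1 : k)) '' (S + T) := by
  rw [← Set.image2_mul, ← Set.image2_add, Set.image2_image_left, Set.image2_image_right,
    Set.image_image2]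
  simp only [monomial_add_one]

lemma span_monomial_mul_span_monomial (S T : Set (Fin m →₀ ℕ)) :
    Ideal.span ((fun e => (monomial e (1 : k) : MvPolynomial (Fin m) k)) '' S) *
      Ideal.span ((fun e => monomial e (1 : k)) '' T) =
        Ideal.span ((fun e => monomial e (1 : k)) '' (S + T)) := by
  rw [Ideal.span_mul_span', image_monomial_one_mul_image]

lemma IsMonomialIdeal.mul {I J : Ideal (MvPolynomial (Fin m) k)} (hI : IsMonomialIdeal I)
    (hJ : IsMonomialIdeal J) : IsMonomialIdeal (I * J) := by
  obtain ⟨S, rfl⟩ := hI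
  obtain ⟨T, rfl⟩ := hJ
  exact ⟨S + T, span_monomial_mul_span_monomial S T⟩

lemma isMonomialIdeal_top : IsMonomialIdeal (⊤ : Ideal (MvPolynomial (Fin m) k)) :=
  ⟨{0}, by simp⟩

lemma IsMonomialIdeal.pow {I : Ideal (MvPolynomial (Fin m) k)} (hI : IsMonomialIdeal I) :
    ∀ n : ℕ, IsMonomialIdeal (I ^ n)
  | 0 => by simpa using isMonomialIdeal_top
  | n + 1 => by simpa only [pow_succ'] using hI.mul (hI.pow n)

lemma IsMonomialIdeal.exists_add_le_of_monomial_mem_mul {I J : Ideal (MvPolynomial (Fin m) k)}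
    (hI : IsMonomialIdeal I) (hJ : IsMonomialIdeal J) {e : Fin m →₀ ℕ}
    (h : monomial e (1 : k) ∈ I * J) :
    ∃ a b, monomial a (1 : k) ∈ I ∧ monomial b (1 : k) ∈ J ∧ a + b ≤ e := by
  obtain ⟨S, rfl⟩ := hI
  obtain ⟨T, rfl⟩ := hJ
  rw [span_monomial_mul_span_monomial, mem_ideal_span_monomial_image] at h
  obtain ⟨_, ⟨a, ha, b, hb, rfl⟩, hle⟩ := h e (by simp)
  exact ⟨a, b, Ideal.subset_span ⟨a, ha, rfl⟩, Ideal.subset_span ⟨b, hb, rfl⟩, hle⟩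

lemma exists_isMinMonomialGen_le {I : Ideal (MvPolynomial (Fin m) k)} {e : Fin m →₀ ℕ}
    (h : monomial e (1 : k) ∈ I) : ∃ e' ≤ e, IsMinMonomialGen I e' := by
  obtain ⟨e', ⟨he'e, he'⟩, hmin⟩ :=
    wellFounded_lt.has_min {e' | e' ≤ e ∧ monomial e' (1 : k) ∈ I} ⟨e, le_rfl, h⟩
  exact ⟨e', he'e, he', fun e'' hle hne hmem =>
    hmin e'' ⟨hle.trans he'e, hmem⟩ (lt_of_le_of_ne hle hne)⟩

lemma IsMinMonomialGen.exists_add_of_mul {I J : Ideal (MvPolynomial (Fin m) k)}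
    (hI : IsMonomialIdeal I) (hJ : IsMonomialIdeal J) {e : Fin m →₀ ℕ}
    (h : IsMinMonomialGen (I * J) e) :
    ∃ a b, IsMinMonomialGen I a ∧ IsMinMonomialGen J b ∧ e = a + b := by
  obtain ⟨u, v, hu, hv, huv⟩ := hI.exists_add_le_of_monomial_mem_mul hJ h.1
  obtain ⟨a, hau, ha⟩ := exists_isMinMonomialGen_le hu
  obtain ⟨b, hbv, hb⟩ := exists_isMinMonomialGen_le hv
  refine ⟨a, b, ha, hb, ?_⟩
  by_contra hne
  refine h.2 (a + b) ((add_le_add hau hbv).trans huv) (Ne.symm hne) ?_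
  rw [monomial_add_one]
  exact Ideal.mul_mem_mul ha.1 hb.1

lemma IsMinMonomialGen.exists_add_of_pow_succ {I : Ideal (MvPolynomial (Fin m) k)}
    (hI : IsMonomialIdeal I) (n : ℕ) {e : Fin m →₀ ℕ} {i : Fin m}
    (h : IsMinMonomialGen (I ^ (n + 1)) e) (hi : e i ≠ 0) :
    ∃ a c, IsMinMonomialGen I a ∧ a i ≠ 0 ∧ monomial c (1 : k) ∈ I ^ n ∧ e = a + c := by
  induction n generalizing e with
  | zero =>
    rw [zero_add, pow_one] at h
    exact ⟨e, 0, h, hi, by simp, (add_zero e).symm⟩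
  | succ n ih =>
    rw [pow_succ'] at h
    obtain ⟨a, b, ha, hb, rfl⟩ := h.exists_add_of_mul hI (hI.pow _)
    by_cases hai : a i = 0
    · have hbi : b i ≠ 0 := by simpa [hai] using hi
      obtain ⟨a', c, ha', ha'i, hc, rfl⟩ := ih hb hbi
      refine ⟨a', a + c, ha', ha'i, ?_, add_left_comm a a' c⟩
      rw [monomial_add_one, pow_succ']
      exact Ideal.mul_mem_mul ha.1 hc
    · exact ⟨a, b, ha, hai, hb.1, rfl⟩

lemma partialStar_pow_succ_le {I : Ideal (MvPolynomial (Fin m) k)} (hI : IsMonomialIdeal I)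
    (n : ℕ) : partialStar (I ^ (n + 1)) ≤ partialStar I * I ^ n := by
  rw [partialStar, Ideal.span_le]
  rintro _ ⟨e, i, he, hei, rfl⟩
  obtain ⟨a, c, ha, hai, hc, rfl⟩ := he.exists_add_of_pow_succ hI n hei
  rw [← Finsupp.sub_single_one_add hai, monomial_add_one]
  exact Ideal.mul_mem_mul (Ideal.subset_span ⟨a, i, ha, hai, rfl⟩) hc

end MonomialIdeal

theorem pow_strongly_golod_general [Field k] (I : Ideal (MvPolynomial (Fin m) k))
    (hmon : IsMonomialIdeal I) (hsg : partialStar I * partialStar I ≤ I)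
    (s : ℕ) :
    partialStar (I ^ s) * partialStar (I ^ s) ≤ I ^ s := by
  obtain _ | n := s
  · simp
  have h := partialStar_pow_succ_le hmon n
  calc partialStar (I ^ (n + 1)) * partialStar (I ^ (n + 1))
      ≤ partialStar I * I ^ n * (partialStar I * I ^ n) := mul_le_mul' h h
    _ = partialStar I * partialStar I * I ^ (n + n) := by ring
    _ ≤ I * I ^ (n + n) := mul_le_mul_left hsg _
    _ = I ^ (n + n + 1) := (pow_succ' I _).symm
    _ ≤ I ^ (n + 1) := Ideal.pow_le_pow_right (by omega)

/-- If `I` is a `*`strongly Golod monomial ideal (`∂*(I)² ⊆ I`), then for every `s ≥ 2`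
the power `I^s` is `*`strongly Golod: `∂*(I^s)² ⊆ I^s`. -/
theorem pow_strongly_golod [Field k] (I : Ideal (MvPolynomial (Fin m) k))
    (hmon : IsMonomialIdeal I) (hsg : partialStar I * partialStar I ≤ I)
    (s : ℕ) (hs : 2 ≤ s) :
    partialStar (I ^ s) * partialStar (I ^ s) ≤ I ^ s :=
  pow_strongly_golod_general I hmon hsg s
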